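/- arXiv:1409.4026 — 2 statements merged into one kernel-verified Lean document; each statement's English description precedes it below -/
import Mathlib

section
/- For the measure κ(dx) = √(3/(2π)) x^{-5/2} dx on (0,∞) and any α, λ > 0, ∫ κ(dx) ((1+αx) e^{-(α+λ)x} - 1 + λx) = -√(2/3) · √(α+λ) · (α - 2λ). -/
/-!
Integrating by parts twice against `x ^ (-s - 1)`, `1 < s < 2`, with the primitive
`G = -x ^ (-s) f / s - x ^ (1 - s) f' / (s (s - 1))` gives
`∫ x ^ (-s - 1) f = (s (s - 1))⁻¹ ∫ x ^ (1 - s) f''` as soon as `f 0 = f' 0 = 0` and `f'`, `f''`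
are bounded: then `f = O(x²)`, `f' = O(x)` near `0` and `f = O(x)` at `∞`, so `G` vanishes at both
ends. For `f x = (1 + α x) e^{-b x} - 1 + λ x` with `b = α + λ` one has
`f'' x = ((λ - α) b + α b² x) e^{-b x}`, whose integral against `x ^ (1 - s)` is a sum of two Gamma
integrals; with `Γ(2 - s) = s (s - 1) Γ(-s)` the result is `Γ(-s) b ^ (s - 1) (λ - (s - 1) α)`.
The density of `κ` is a multiple of `x ^ (-5/2)`, i.e. `s = 3/2`, and `Γ(-3/2) = 4 √π / 3`.
-/

open Real MeasureTheory Set Filter Topology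

lemma abs_le_mul_of_abs_deriv_le {f f' : ℝ → ℝ} {x C : ℝ} (hx : 0 ≤ x)
    (hf : ∀ y ∈ Icc 0 x, HasDerivAt f (f' y) y) (hf₀ : f 0 = 0)
    (hC : ∀ y ∈ Icc 0 x, |f' y| ≤ C) : |f x| ≤ C * x := by
  simpa [hf₀] using norm_image_sub_le_of_norm_deriv_le_segment'
    (fun y hy ↦ (hf y hy).hasDerivWithinAt) (fun y hy ↦ hC y (Ico_subset_Icc_self hy)) x
    ⟨hx, le_rfl⟩

lemma abs_le_mul_sq_of_abs_deriv2_le {f f' f'' : ℝ → ℝ} {x A : ℝ} (hx : 0 ≤ x)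
    (hf : ∀ y ∈ Icc 0 x, HasDerivAt f (f' y) y) (hf' : ∀ y ∈ Icc 0 x, HasDerivAt f' (f'' y) y)
    (hf₀ : f 0 = 0) (hf'₀ : f' 0 = 0) (hA : ∀ y ∈ Icc 0 x, |f'' y| ≤ A) :
    |f x| ≤ A * x ^ 2 := by
  have hA₀ : 0 ≤ A := (abs_nonneg _).trans (hA 0 ⟨le_rfl, hx⟩)
  have hf'_le : ∀ y ∈ Icc 0 x, |f' y| ≤ A * x := fun y hy ↦
    (abs_le_mul_of_abs_deriv_le hy.1 (fun z hz ↦ hf' z ⟨hz.1, hz.2.trans hy.2⟩) hf'₀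
      (fun z hz ↦ hA z ⟨hz.1, hz.2.trans hy.2⟩)).trans (mul_le_mul_of_nonneg_left hy.2 hA₀)
  simpa [sq, mul_assoc] using abs_le_mul_of_abs_deriv_le hx hf hf₀ hf'_le

lemma abs_rpow_mul_le {x y p q C : ℝ} {n : ℕ} (hx : 0 < x) (hy : |y| ≤ C * x ^ n)
    (hpq : p + n = q) : |x ^ p * y| ≤ C * x ^ q := by
  rw [abs_mul, abs_of_pos (rpow_pos_of_pos hx p), ← hpq, rpow_add_natCast hx.ne']
  calc x ^ p * |y| ≤ x ^ p * (C * x ^ n) := by gcongr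
    _ = C * (x ^ p * x ^ n) := by ring

lemma integrableOn_Ioi_zero_of_abs_le_rpow {f : ℝ → ℝ} {p q C₀ C₁ : ℝ} (hp : -1 < p)
    (hq : q < -1) (hf : ContinuousOn f (Ioi 0)) (h₀ : ∀ x ∈ Ioc 0 1, |f x| ≤ C₀ * x ^ p)
    (h₁ : ∀ x ∈ Ioi 1, |f x| ≤ C₁ * x ^ q) : IntegrableOn f (Ioi 0) := by
  rw [← Ioc_union_Ioi_eq_Ioi zero_le_one]
  refine IntegrableOn.union ?_ ?_
  · have hg : IntegrableOn (fun x ↦ C₀ * x ^ p) (Ioc 0 1) :=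
      ((intervalIntegrable_iff_integrableOn_Ioc_of_le zero_le_one).1
        (intervalIntegral.intervalIntegrable_rpow' hp)).const_mul _
    exact hg.mono' ((hf.mono Ioc_subset_Ioi_self).aestronglyMeasurable measurableSet_Ioc)
      ((ae_restrict_iff' measurableSet_Ioc).2 (ae_of_all _ h₀))
  · have hg : IntegrableOn (fun x ↦ C₁ * x ^ q) (Ioi 1) :=
      (integrableOn_Ioi_rpow_of_lt hq one_pos).const_mul _
    exact hg.mono' ((hf.mono (Ioi_subset_Ioi zero_le_one)).aestronglyMeasurable measurableSet_Ioi)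
      ((ae_restrict_iff' measurableSet_Ioi).2 (ae_of_all _ h₁))

lemma integrableOn_rpow_neg_sub_one_mul {f : ℝ → ℝ} {s A B : ℝ} (hs₁ : 1 < s) (hs₂ : s < 2)
    (hf : ContinuousOn f (Ioi 0)) (hA : ∀ x > 0, |f x| ≤ A * x ^ 2)
    (hB : ∀ x > 0, |f x| ≤ B * x) : IntegrableOn (fun x ↦ x ^ (-s - 1) * f x) (Ioi 0) :=
  integrableOn_Ioi_zero_of_abs_le_rpow (p := 1 - s) (q := -s) (by linarith) (by linarith)
    ((continuousOn_id.rpow_const fun x hx ↦ Or.inl (ne_of_gt hx)).mul hf)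
    (fun x hx ↦ abs_rpow_mul_le hx.1 (hA x hx.1) (by push_cast; ring))
    (fun x hx ↦ abs_rpow_mul_le (n := 1) (zero_lt_one.trans hx)
      (by simpa using hB x (zero_lt_one.trans hx)) (by push_cast; ring))

noncomputable def ibpBoundary (s : ℝ) (f f' : ℝ → ℝ) (x : ℝ) : ℝ :=
  -s⁻¹ * (x ^ (-s) * f x) - (s * (s - 1))⁻¹ * (x ^ (1 - s) * f' x)

lemma hasDerivAt_ibpBoundary {f f' f'' : ℝ → ℝ} {s x : ℝ} (hs₀ : s ≠ 0) (hs₁ : s ≠ 1)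
    (hx : 0 < x) (hf : HasDerivAt f (f' x) x) (hf' : HasDerivAt f' (f'' x) x) :
    HasDerivAt (ibpBoundary s f f')
      (x ^ (-s - 1) * f x - (s * (s - 1))⁻¹ * (x ^ (1 - s) * f'' x)) x := by
  have h₁ := (hasDerivAt_rpow_const (p := -s) (Or.inl hx.ne')).mul hf
  have h₂ := (hasDerivAt_rpow_const (p := 1 - s) (Or.inl hx.ne')).mul hf'
  refine ((h₁.const_mul (-s⁻¹)).sub (h₂.const_mul (s * (s - 1))⁻¹)).congr_deriv ?_
  rw [show 1 - s - 1 = -s by ring]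
  have : s - 1 ≠ 0 := sub_ne_zero.2 hs₁
  field_simp
  ring

lemma abs_ibpBoundary_le {f f' : ℝ → ℝ} {s x C : ℝ} {n : ℕ} (hs : 1 < s) (hx : 0 < x)
    (hf : |f x| ≤ C * x ^ (n + 1)) (hf' : |f' x| ≤ C * x ^ n) :
    |ibpBoundary s f f' x| ≤ (s⁻¹ + (s * (s - 1))⁻¹) * C * x ^ (n + 1 - s) := by
  have hs₀ : 0 < s⁻¹ := inv_pos.2 (by linarith)
  have hc : 0 < (s * (s - 1))⁻¹ := inv_pos.2 (mul_pos (by linarith) (by linarith))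
  calc |ibpBoundary s f f' x|
      ≤ |-s⁻¹ * (x ^ (-s) * f x)| + |(s * (s - 1))⁻¹ * (x ^ (1 - s) * f' x)| := abs_sub _ _
    _ = s⁻¹ * |x ^ (-s) * f x| + (s * (s - 1))⁻¹ * |x ^ (1 - s) * f' x| := by
      rw [abs_mul, abs_mul _ (_ * _), abs_neg, abs_of_pos hs₀, abs_of_pos hc]
    _ ≤ s⁻¹ * (C * x ^ (n + 1 - s)) + (s * (s - 1))⁻¹ * (C * x ^ (n + 1 - s)) := by
      gcongr
      · exact abs_rpow_mul_le hx hf (by push_cast; ring)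
      · exact abs_rpow_mul_le hx hf' (by ring)
    _ = _ := by ring

-- The junk value `0 ^ p = 0` (`p ≠ 0`) makes this agree with the limit at `0⁺`.
lemma ibpBoundary_zero {f f' : ℝ → ℝ} {s : ℝ} (hs₀ : s ≠ 0) (hs₁ : s ≠ 1) :
    ibpBoundary s f f' 0 = 0 := by
  simp [ibpBoundary, zero_rpow (neg_ne_zero.2 hs₀), zero_rpow (sub_ne_zero.2 hs₁.symm)]

lemma continuousWithinAt_ibpBoundary_zero {f f' : ℝ → ℝ} {s A : ℝ} (hs₁ : 1 < s) (hs₂ : s < 2)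
    (hf : ∀ x > 0, |f x| ≤ A * x ^ 2) (hf' : ∀ x > 0, |f' x| ≤ A * x) :
    ContinuousWithinAt (ibpBoundary s f f') (Ici 0) 0 := by
  rw [← continuousWithinAt_Ioi_iff_Ici, ContinuousWithinAt,
    ibpBoundary_zero (by linarith) (by linarith)]
  have hlim := ((continuousAt_rpow_const 0 (2 - s) (Or.inr (by linarith))).tendsto.mono_left
    (nhdsWithin_le_nhds (s := Ioi 0))).const_mul ((s⁻¹ + (s * (s - 1))⁻¹) * A)
  rw [zero_rpow (by linarith), mul_zero] at hlim
  refine squeeze_zero_norm' ?_ hlim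
  filter_upwards [self_mem_nhdsWithin] with x (hx : 0 < x)
  simpa [one_add_one_eq_two] using
    abs_ibpBoundary_le (n := 1) hs₁ hx (hf x hx) (by simpa using hf' x hx)

lemma tendsto_ibpBoundary_atTop {f f' : ℝ → ℝ} {s B : ℝ} (hs : 1 < s)
    (hf : ∀ x > 0, |f x| ≤ B * x) (hf' : ∀ x > 0, |f' x| ≤ B) :
    Tendsto (ibpBoundary s f f') atTop (𝓝 0) := by
  have hlim := (tendsto_rpow_neg_atTop (by linarith : 0 < s - 1)).const_mul
    ((s⁻¹ + (s * (s - 1))⁻¹) * B)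
  rw [mul_zero, neg_sub] at hlim
  refine squeeze_zero_norm' ?_ hlim
  filter_upwards [eventually_gt_atTop 0] with x hx
  simpa using abs_ibpBoundary_le (n := 0) hs hx (by simpa using hf x hx) (by simpa using hf' x hx)

theorem integral_rpow_neg_sub_one_mul_eq {f f' f'' : ℝ → ℝ} {s A B : ℝ}
    (hs₁ : 1 < s) (hs₂ : s < 2)
    (hf : ∀ x ≥ 0, HasDerivAt f (f' x) x) (hf' : ∀ x ≥ 0, HasDerivAt f' (f'' x) x)
    (hf₀ : f 0 = 0) (hf'₀ : f' 0 = 0)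
    (hf'_le : ∀ x ≥ 0, |f' x| ≤ B) (hf''_le : ∀ x ≥ 0, |f'' x| ≤ A)
    (hf''_int : IntegrableOn (fun x ↦ x ^ (1 - s) * f'' x) (Ioi 0)) :
    ∫ x in Ioi 0, x ^ (-s - 1) * f x = (s * (s - 1))⁻¹ * ∫ x in Ioi 0, x ^ (1 - s) * f'' x := by
  have hf_sq : ∀ x > 0, |f x| ≤ A * x ^ 2 := fun x hx ↦ abs_le_mul_sq_of_abs_deriv2_le hx.le
    (fun y hy ↦ hf y hy.1) (fun y hy ↦ hf' y hy.1) hf₀ hf'₀ (fun y hy ↦ hf''_le y hy.1)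
  have hf'_lin : ∀ x > 0, |f' x| ≤ A * x := fun x hx ↦
    abs_le_mul_of_abs_deriv_le hx.le (fun y hy ↦ hf' y hy.1) hf'₀ (fun y hy ↦ hf''_le y hy.1)
  have hf_lin : ∀ x > 0, |f x| ≤ B * x := fun x hx ↦
    abs_le_mul_of_abs_deriv_le hx.le (fun y hy ↦ hf y hy.1) hf₀ (fun y hy ↦ hf'_le y hy.1)
  have hint := integrableOn_rpow_neg_sub_one_mul hs₁ hs₂
    (fun x hx ↦ (hf x (le_of_lt hx)).continuousAt.continuousWithinAt) hf_sq hf_lin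
  have hFTC := integral_Ioi_of_hasDerivAt_of_tendsto
    (continuousWithinAt_ibpBoundary_zero hs₁ hs₂ hf_sq hf'_lin)
    (fun x hx ↦ hasDerivAt_ibpBoundary (by linarith) (by linarith) hx (hf x (le_of_lt hx))
      (hf' x (le_of_lt hx)))
    (hint.sub (hf''_int.const_mul _))
    (tendsto_ibpBoundary_atTop hs₁ hf_lin (fun x hx ↦ hf'_le x hx.le))
  rw [integral_sub hint (hf''_int.const_mul _), integral_const_mul,
    ibpBoundary_zero (by linarith) (by linarith)] at hFTC
  linarith

section LevyIntegrand

variable (a l : ℝ)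

noncomputable def levyIntegrand (x : ℝ) : ℝ := (1 + a * x) * exp (-(a + l) * x) - 1 + l * x

noncomputable def levyIntegrand' (x : ℝ) : ℝ :=
  l * (1 - exp (-(a + l) * x)) - a * (a + l) * x * exp (-(a + l) * x)

noncomputable def levyIntegrand'' (x : ℝ) : ℝ :=
  ((l - a) * (a + l) + a * (a + l) ^ 2 * x) * exp (-(a + l) * x)

lemma mul_exp_neg_le_one (u : ℝ) : u * exp (-u) ≤ 1 :=
  (mul_exp_neg_le_exp_neg_one u).trans (exp_le_one_iff.2 (by norm_num))

lemma hasDerivAt_exp_neg_mul (b x : ℝ) :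
    HasDerivAt (fun y ↦ exp (-b * y)) (-b * exp (-b * x)) x := by
  simpa [mul_comm] using ((hasDerivAt_id x).const_mul (-b)).exp

lemma hasDerivAt_levyIntegrand (x : ℝ) :
    HasDerivAt (levyIntegrand a l) (levyIntegrand' a l x) x := by
  have h := (((hasDerivAt_id x).const_mul a).const_add 1).mul (hasDerivAt_exp_neg_mul (a + l) x)
  refine ((h.sub_const 1).add ((hasDerivAt_id x).const_mul l)).congr_deriv ?_
  simp only [levyIntegrand', id]
  ring

lemma hasDerivAt_levyIntegrand' (x : ℝ) :
    HasDerivAt (levyIntegrand' a l) (levyIntegrand'' a l x) x := by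
  have h₁ := ((hasDerivAt_exp_neg_mul (a + l) x).const_sub 1).const_mul l
  have h₂ := ((hasDerivAt_id x).const_mul (a * (a + l))).mul (hasDerivAt_exp_neg_mul (a + l) x)
  refine (h₁.sub h₂).congr_deriv ?_
  simp only [levyIntegrand'', id]
  ring

variable {a l}

lemma abs_levyIntegrand'_le (hb : 0 ≤ a + l) {x : ℝ} (hx : 0 ≤ x) :
    |levyIntegrand' a l x| ≤ |l| + |a| := by
  set u := (a + l) * x
  have hu : 0 ≤ u := mul_nonneg hb hx
  have he : 0 < exp (-u) := exp_pos _
  have he₁ : exp (-u) ≤ 1 := exp_le_one_iff.2 (neg_nonpos.2 hu)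
  have hue := mul_exp_neg_le_one u
  have hform : levyIntegrand' a l x = l * (1 - exp (-u)) - a * (u * exp (-u)) := by
    simp only [levyIntegrand', u, neg_mul]
    ring
  rw [hform]
  calc _ ≤ |l * (1 - exp (-u))| + |a * (u * exp (-u))| := abs_sub _ _
    _ ≤ |l| * 1 + |a| * 1 := by
      rw [abs_mul, abs_mul]
      gcongr
      · exact abs_le.2 ⟨by linarith, by linarith⟩
      · exact abs_le.2 ⟨by nlinarith, hue⟩
    _ = |l| + |a| := by ring

lemma abs_levyIntegrand''_le (hb : 0 ≤ a + l) {x : ℝ} (hx : 0 ≤ x) :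
    |levyIntegrand'' a l x| ≤ (|l - a| + |a|) * (a + l) := by
  set u := (a + l) * x
  have hu : 0 ≤ u := mul_nonneg hb hx
  have he : 0 < exp (-u) := exp_pos _
  have he₁ : exp (-u) ≤ 1 := exp_le_one_iff.2 (neg_nonpos.2 hu)
  have hue := mul_exp_neg_le_one u
  have hform : levyIntegrand'' a l x = (a + l) * ((l - a) * exp (-u) + a * (u * exp (-u))) := by
    simp only [levyIntegrand'', u, neg_mul]
    ring
  rw [hform, abs_mul, abs_of_nonneg hb, mul_comm]
  gcongr
  calc _ ≤ |(l - a) * exp (-u)| + |a * (u * exp (-u))| := abs_add_le _ _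
    _ ≤ |l - a| * 1 + |a| * 1 := by
      rw [abs_mul, abs_mul]
      gcongr
      · exact abs_le.2 ⟨by linarith, he₁⟩
      · exact abs_le.2 ⟨by nlinarith, hue⟩
    _ = |l - a| + |a| := by ring

lemma integrableOn_rpow_sub_one_mul_exp_neg_mul {t b : ℝ} (ht : 0 < t) (hb : 0 < b) :
    IntegrableOn (fun x ↦ x ^ (t - 1) * exp (-(b * x))) (Ioi 0) := by
  simpa using integrableOn_rpow_mul_exp_neg_mul_rpow (p := 1) (s := t - 1) (by linarith) one_pos hb

lemma rpow_one_sub_mul_levyIntegrand''_eq {s x : ℝ} (hx : 0 < x) :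
    x ^ (1 - s) * levyIntegrand'' a l x =
      (l - a) * (a + l) * (x ^ ((2 - s) - 1) * exp (-((a + l) * x)))
        + a * (a + l) ^ 2 * (x ^ ((3 - s) - 1) * exp (-((a + l) * x))) := by
  rw [show (3 - s) - 1 = (1 - s) + 1 by ring, rpow_add_one hx.ne', show 2 - s - 1 = 1 - s by ring]
  simp only [levyIntegrand'', neg_mul]
  ring

lemma integrableOn_rpow_one_sub_mul_levyIntegrand'' {s : ℝ} (hs : s < 2) (hb : 0 < a + l) :
    IntegrableOn (fun x ↦ x ^ (1 - s) * levyIntegrand'' a l x) (Ioi 0) := by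
  have h₂ := integrableOn_rpow_sub_one_mul_exp_neg_mul (t := 2 - s) (by linarith) hb
  have h₃ := integrableOn_rpow_sub_one_mul_exp_neg_mul (t := 3 - s) (by linarith) hb
  exact IntegrableOn.congr_fun ((h₂.const_mul _).add (h₃.const_mul _))
    (fun _ hx ↦ (rpow_one_sub_mul_levyIntegrand''_eq hx).symm) measurableSet_Ioi

lemma integral_rpow_one_sub_mul_levyIntegrand'' {s : ℝ} (hs : s < 2) (hb : 0 < a + l) :
    ∫ x in Ioi 0, x ^ (1 - s) * levyIntegrand'' a l x
      = Gamma (2 - s) * (a + l) ^ (s - 1) * (l - (s - 1) * a) := by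
  rw [setIntegral_congr_fun measurableSet_Ioi fun _ hx ↦ rpow_one_sub_mul_levyIntegrand''_eq hx,
    integral_add ((integrableOn_rpow_sub_one_mul_exp_neg_mul (by linarith) hb).const_mul _)
      ((integrableOn_rpow_sub_one_mul_exp_neg_mul (by linarith) hb).const_mul _),
    integral_const_mul, integral_const_mul, integral_rpow_mul_exp_neg_mul_Ioi (by linarith) hb,
    integral_rpow_mul_exp_neg_mul_Ioi (by linarith) hb, show 3 - s = 2 - s + 1 by ring,
    Gamma_add_one (by linarith), rpow_add_one (by positivity),
    show s - 1 = -(2 - s) + 1 by ring, rpow_add_one hb.ne', rpow_neg hb.le, one_div,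
    inv_rpow hb.le]
  field_simp
  ring

theorem integral_rpow_neg_sub_one_mul_levyIntegrand {s : ℝ} (hs₁ : 1 < s) (hs₂ : s < 2)
    (hb : 0 < a + l) :
    ∫ x in Ioi 0, x ^ (-s - 1) * levyIntegrand a l x
      = Gamma (-s) * (a + l) ^ (s - 1) * (l - (s - 1) * a) := by
  rw [integral_rpow_neg_sub_one_mul_eq hs₁ hs₂ (fun x _ ↦ hasDerivAt_levyIntegrand a l x)
    (fun x _ ↦ hasDerivAt_levyIntegrand' a l x) (by simp [levyIntegrand])
    (by simp [levyIntegrand']) (fun _ hx ↦ abs_levyIntegrand'_le hb.le hx)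
    (fun _ hx ↦ abs_levyIntegrand''_le hb.le hx)
    (integrableOn_rpow_one_sub_mul_levyIntegrand'' hs₂ hb),
    integral_rpow_one_sub_mul_levyIntegrand'' hs₂ hb, show 2 - s = -s + 1 + 1 by ring,
    Gamma_add_one (by linarith), Gamma_add_one (by linarith)]
  have : s - 1 ≠ 0 := by linarith
  have : s ≠ 0 := by linarith
  field_simp
  ring

end LevyIntegrand

/-- For the measure `κ(dx) = √(3/(2π)) x^{-5/2} dx` on `(0,∞)` and `α, λ > 0`,
`∫ κ(dx) ((1+αx) e^{-(α+λ)x} - 1 + λx) = -√(2/3) √(α+λ) (α - 2λ)`. -/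
theorem stmt_5 (α lam : ℝ) (hα : 0 < α) (hlam : 0 < lam) :
    ∫ x in Set.Ioi (0:ℝ),
        Real.sqrt (3 / (2 * Real.pi)) * x ^ (-(5:ℝ)/2)
          * ((1 + α * x) * Real.exp (-(α + lam) * x) - 1 + lam * x)
      = -Real.sqrt (2/3) * Real.sqrt (α + lam) * (α - 2 * lam) := by
  have h := integral_rpow_neg_sub_one_mul_levyIntegrand (s := 3 / 2) (by norm_num) (by norm_num)
    (add_pos hα hlam)
  have hΓ : Gamma (-(3 / 2)) = 4 / 3 * √π := by
    have h := Gamma_one_half_eq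
    rw [show (1 : ℝ) / 2 = -(3 / 2) + 1 + 1 by norm_num, Gamma_add_one (by norm_num),
      Gamma_add_one (by norm_num)] at h
    linarith
  have hc : √(3 / (2 * π)) * √π = 3 / 2 * √(2 / 3) := by
    rw [← sqrt_mul (by positivity), show 3 / (2 * π) * π = (3 / 2) ^ 2 * (2 / 3) by field_simp,
      sqrt_mul (by positivity), sqrt_sq (by norm_num)]
  rw [hΓ, show (3 / 2 : ℝ) - 1 = 1 / 2 by norm_num, ← sqrt_eq_rpow,
    show -(3 / 2 : ℝ) - 1 = -5 / 2 by norm_num] at h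
  simp only [levyIntegrand] at h
  simp_rw [mul_assoc, integral_const_mul]
  rw [h]
  linear_combination 4 / 3 * √(α + lam) * (lam - 1 / 2 * α) * hc
end

section
/- For every λ > √(μ/2), the function u(x) = √(μ/2)(3 coth²((2μ)^{1/4} x + coth^{-1}√(2/3 + (1/3)√(2/μ) λ))² - 2), defined for x > 0, solves the boundary value problem (1/2)u'' = 2u² - μ on (0,∞) with u(0) = λ and lim_{x→∞} u(x) = √(μ/2). -/
/-!
Since `coth' = 1 - coth²`, the function `v = 3 coth² - 2` satisfies `v' = 6 coth (1 - coth²)` and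
`v'' = 2 v² - 2` wherever `sinh ≠ 0`. With `K = √(μ/2)` and `c = (2μ)^{1/4}` one has `c² = 2K` and
`2K² = μ`, which is exactly what makes `u x = K v (c x + a)` solve `u'' = 4u² - 2μ`. The shift
`a = arcoth y` is positive (so `c x + a` stays away from the pole of `coth` for `x > 0`) and is
chosen so that `coth a = y`, i.e. `u 0 = K (3y² - 2) = λ`; finally `coth → 1` gives `u → K`.
-/

open Real Filter

noncomputable def coth (x : ℝ) : ℝ := Real.cosh x / Real.sinh x

/-- Inverse hyperbolic cotangent on `(1, ∞)`. -/
noncomputable def arcoth (y : ℝ) : ℝ := (1/2) * Real.log ((y + 1) / (y - 1))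

open Topology

lemma coth_eq_inv_tanh (x : ℝ) : coth x = (tanh x)⁻¹ := by
  rw [coth, tanh_eq_sinh_div_cosh, inv_div]

lemma arcoth_eq_artanh_inv {y : ℝ} (hy : 1 < y) : arcoth y = artanh y⁻¹ := by
  have hy' : y⁻¹ < 1 := inv_lt_one_of_one_lt₀ hy
  have hy0 : 0 < y⁻¹ := inv_pos.2 (by linarith)
  rw [arcoth, artanh_eq_half_log ⟨by linarith, hy'.le⟩]
  congr 2
  field_simp

lemma coth_arcoth {y : ℝ} (hy : 1 < y) : coth (arcoth y) = y := by
  rw [coth_eq_inv_tanh, arcoth_eq_artanh_inv hy,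
    tanh_artanh ⟨by linarith [inv_pos.2 (zero_lt_one.trans hy)], inv_lt_one_of_one_lt₀ hy⟩,
    inv_inv]

lemma arcoth_pos {y : ℝ} (hy : 1 < y) : 0 < arcoth y := by
  rw [arcoth_eq_artanh_inv hy]
  exact artanh_pos ⟨inv_pos.2 (zero_lt_one.trans hy), inv_lt_one_of_one_lt₀ hy⟩

lemma tanh_eq_exp_neg_two_mul (x : ℝ) :
    tanh x = (1 - exp (-(2 * x))) / (1 + exp (-(2 * x))) := by
  rw [tanh_eq, ← mul_div_mul_left _ _ (exp_pos (-x)).ne', mul_sub, mul_add, ← exp_add,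
    ← exp_add, neg_add_cancel, exp_zero, ← two_mul, neg_mul_eq_mul_neg]

lemma tendsto_tanh_atTop : Tendsto tanh atTop (𝓝 1) := by
  have h : Tendsto (fun x => exp (-(2 * x))) atTop (𝓝 0) :=
    tendsto_exp_neg_atTop_nhds_zero.comp (tendsto_id.const_mul_atTop two_pos)
  have h' := (tendsto_const_nhds (x := (1:ℝ))).sub h |>.div (tendsto_const_nhds.add h)
    (by norm_num : (1:ℝ) + 0 ≠ 0)
  rw [sub_zero, add_zero, div_one] at h'
  exact h'.congr fun x => (tanh_eq_exp_neg_two_mul x).symm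

lemma tendsto_coth_atTop : Tendsto coth atTop (𝓝 1) := by
  simpa only [inv_one, ← coth_eq_inv_tanh] using tendsto_tanh_atTop.inv₀ one_ne_zero

lemma hasDerivAt_coth {x : ℝ} (hx : sinh x ≠ 0) : HasDerivAt coth (1 - coth x ^ 2) x := by
  refine ((hasDerivAt_cosh x).div (hasDerivAt_sinh x) hx).congr_deriv ?_
  rw [coth, div_pow, one_sub_div (pow_ne_zero 2 hx)]
  ring

lemma hasDerivAt_three_mul_coth_sq_sub_two {t : ℝ} (ht : sinh t ≠ 0) :
    HasDerivAt (fun s => 3 * coth s ^ 2 - 2) (6 * coth t * (1 - coth t ^ 2)) t := by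
  refine (((hasDerivAt_coth ht).pow 2).const_mul 3 |>.sub_const 2).congr_deriv ?_
  push_cast
  ring

lemma hasDerivAt_six_mul_coth_mul_one_sub_coth_sq {t : ℝ} (ht : sinh t ≠ 0) :
    HasDerivAt (fun s => 6 * coth s * (1 - coth s ^ 2)) (2 * (3 * coth t ^ 2 - 2) ^ 2 - 2) t := by
  have h := hasDerivAt_coth ht
  refine ((h.const_mul 6).mul ((h.pow 2).const_sub 1)).congr_deriv ?_
  simp only [Pi.pow_apply, Nat.cast_ofNat]
  ring

lemma hasDerivAt_rescale_of_hasDerivAt {v v' : ℝ → ℝ} {K c a μ x : ℝ}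
    (hc : c ^ 2 = 2 * K) (hK : 2 * K ^ 2 = μ)
    (hv : HasDerivAt v (v' (c * x + a)) (c * x + a))
    (hv' : HasDerivAt v' (2 * v (c * x + a) ^ 2 - 2) (c * x + a)) :
    HasDerivAt (fun x => K * v (c * x + a)) (K * c * v' (c * x + a)) x ∧
      HasDerivAt (fun x => K * c * v' (c * x + a)) (4 * (K * v (c * x + a)) ^ 2 - 2 * μ) x := by
  have hlin : HasDerivAt (fun x => c * x + a) c x := by
    simpa using ((hasDerivAt_id x).const_mul c).add_const a
  refine ⟨((hv.comp x hlin).const_mul K).congr_deriv (by ring),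
    ((hv'.comp x hlin).const_mul (K * c)).congr_deriv ?_⟩
  linear_combination (2 * K * v (c * x + a) ^ 2 - 2 * K) * hc - 2 * hK

lemma rpow_one_div_four_sq_eq_two_mul_sqrt_half {μ : ℝ} (hμ : 0 ≤ μ) :
    ((2 * μ) ^ ((1 : ℝ) / 4)) ^ 2 = 2 * √(μ / 2) := by
  have h4 : (((2 * μ) ^ ((1 : ℝ) / 4)) ^ 2) ^ 2 = (2 * √(μ / 2)) ^ 2 := by
    rw [← pow_mul, mul_pow, sq_sqrt (by positivity), one_div,
      show (4 : ℝ)⁻¹ = ((4 : ℕ) : ℝ)⁻¹ by norm_num,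
      rpow_inv_natCast_pow (by positivity) (by norm_num)]
    ring
  exact (pow_left_inj₀ (by positivity) (by positivity) two_ne_zero).1 h4

/-- For `λ > √(μ/2)`, `u(x) = √(μ/2)(3 coth²((2μ)^{1/4} x + arcoth √(2/3 + (1/3)√(2/μ)λ)) - 2)`
solves `(1/2)u'' = 2u² - μ` on `(0,∞)` with `u(0) = λ` and `u(∞) = √(μ/2)`. -/
theorem stmt_9 (μ lam : ℝ) (hμ : 0 < μ) (hlam : Real.sqrt (μ/2) < lam) :
    ∀ u : ℝ → ℝ,
      (∀ x : ℝ, u x = Real.sqrt (μ/2) *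
        (3 * (coth ((2*μ) ^ ((1:ℝ)/4) * x
          + arcoth (Real.sqrt (2/3 + (1/3) * Real.sqrt (2/μ) * lam)))) ^ 2 - 2)) →
      ∃ u' : ℝ → ℝ,
        (∀ x : ℝ, 0 < x →
          HasDerivAt u (u' x) x ∧ HasDerivAt u' (4 * (u x) ^ 2 - 2 * μ) x) ∧
        u 0 = lam ∧
        Tendsto u atTop (nhds (Real.sqrt (μ/2))) := by
  intro u hu
  set K := √(μ / 2)
  set c := (2 * μ) ^ ((1 : ℝ) / 4)
  set y := √(2 / 3 + 1 / 3 * √(2 / μ) * lam)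
  set a := arcoth y
  have hK : 2 * K ^ 2 = μ := by rw [sq_sqrt (by positivity)]; ring
  have hc : c ^ 2 = 2 * K := rpow_one_div_four_sq_eq_two_mul_sqrt_half hμ.le
  have hc0 : 0 < c := by positivity
  have hKinv : √(2 / μ) * K = 1 := by
    rw [← sqrt_mul (by positivity), div_mul_div_comm, mul_comm, div_self (by positivity), sqrt_one]
  have hy2 : 1 < 2 / 3 + 1 / 3 * √(2 / μ) * lam := by
    nlinarith [mul_lt_mul_of_pos_left hlam (sqrt_pos.2 (div_pos two_pos hμ))]
  have hy : 1 < y := by simpa using (lt_sqrt zero_le_one).2 (by simpa using hy2)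
  have ha : 0 < a := arcoth_pos hy
  obtain rfl : u = fun x => K * (3 * coth (c * x + a) ^ 2 - 2) := funext hu
  refine ⟨fun x => K * c * (6 * coth (c * x + a) * (1 - coth (c * x + a) ^ 2)), fun x hx => ?_,
    ?_, ?_⟩
  · have hs : sinh (c * x + a) ≠ 0 := (sinh_pos_iff.2 (by positivity)).ne'
    exact hasDerivAt_rescale_of_hasDerivAt (v := fun s => 3 * coth s ^ 2 - 2)
      (v' := fun s => 6 * coth s * (1 - coth s ^ 2)) hc hK
      (hasDerivAt_three_mul_coth_sq_sub_two hs) (hasDerivAt_six_mul_coth_mul_one_sub_coth_sq hs)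
  · show K * (3 * coth (c * 0 + a) ^ 2 - 2) = lam
    rw [mul_zero, zero_add, coth_arcoth hy, sq_sqrt (by linarith)]
    linear_combination lam * hKinv
  · have ht : Tendsto (fun x => c * x + a) atTop atTop :=
      tendsto_atTop_add_const_right _ a (tendsto_id.const_mul_atTop hc0)
    have h := ((tendsto_coth_atTop.comp ht).pow 2 |>.const_mul 3 |>.sub_const 2).const_mul K
    rwa [one_pow, mul_one, show (3 : ℝ) - 2 = 1 by norm_num, mul_one] at h
end
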